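/- If the distribution function of X is continuous and strictly increasing at the α-quantile, then VaR_α(X) is the unique minimizer over v ∈ ℝ of E[(1{X < v} − α)(v − X)]. -/

import Mathlib

open MeasureTheory Filter
open scoped Topology ENNReal

noncomputable def checkLoss (α x v : ℝ) : ℝ :=
  ((if x < v then (1 : ℝ) else 0) - α) * (v - x)

/-- The CDF of a measure on ℝ as a real-valued function. -/
noncomputable def cdfFun (μ : Measure ℝ) (x : ℝ) : ℝ := (μ (Set.Iic x)).toReal

/-- VaR at level α: the lower α-quantile. -/
noncomputable def VaR (μ : Measure ℝ) (α : ℝ) : ℝ := sInf {x : ℝ | α ≤ cdfFun μ x}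

section Aux

variable {μ : Measure ℝ} [IsProbabilityMeasure μ] {α : ℝ}

lemma cdfFun_mono : Monotone (cdfFun μ) := fun a b hab =>
  ENNReal.toReal_mono (measure_ne_top μ _)
    (measure_mono (Set.Iic_subset_Iic.2 hab))

lemma measure_Iic_eq (μ : Measure ℝ) [IsProbabilityMeasure μ] (t : ℝ) :
    μ (Set.Iic t) = ENNReal.ofReal (cdfFun μ t) :=
  (ENNReal.ofReal_toReal (measure_ne_top μ _)).symm

lemma le_cdf_iff {t : ℝ} : α ≤ cdfFun μ t ↔ ENNReal.ofReal α ≤ μ (Set.Iic t) :=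
  (ENNReal.ofReal_le_iff_le_toReal (measure_ne_top μ _)).symm

lemma VaR_set_nonempty (hα : α < 1) : {x : ℝ | α ≤ cdfFun μ x}.Nonempty := by
  have h := tendsto_measure_Iic_atTop μ
  rw [measure_univ] at h
  have h2 : ∀ᶠ x in Filter.atTop, ENNReal.ofReal α < μ (Set.Iic x) :=
    h.eventually (eventually_gt_nhds (by simpa using hα))
  obtain ⟨x, hx⟩ := h2.exists
  exact ⟨x, le_cdf_iff.2 hx.le⟩

lemma VaR_set_bddBelow (hα : 0 < α) : BddBelow {x : ℝ | α ≤ cdfFun μ x} := by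
  have hinter : ⋂ n : ℝ, Set.Iic n = (∅ : Set ℝ) := by
    ext y
    simp only [Set.mem_iInter, Set.mem_Iic, Set.mem_empty_iff_false, iff_false, not_forall]
    exact ⟨y - 1, by push_neg; linarith⟩
  have h : Filter.Tendsto (μ ∘ fun n : ℝ => Set.Iic n) Filter.atBot (𝓝 0) := by
    have := tendsto_measure_iInter_atBot (μ := μ)
      (fun n : ℝ => (measurableSet_Iic (a := n)).nullMeasurableSet)
      (fun a b hab => Set.Iic_subset_Iic.2 hab) ⟨0, measure_ne_top μ _⟩
    rwa [hinter, measure_empty] at this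
  have h2 : ∀ᶠ x in Filter.atBot, μ (Set.Iic x) < ENNReal.ofReal α :=
    h.eventually (eventually_lt_nhds (by simpa using hα))
  obtain ⟨b, hb⟩ := Filter.eventually_atBot.1 h2
  refine ⟨b, fun y hy => ?_⟩
  by_contra hby
  push_neg at hby
  exact absurd (le_cdf_iff.1 hy) (not_le.2 (hb y hby.le))

lemma cdf_lt_of_lt_VaR (hα : α ∈ Set.Ioo (0:ℝ) 1) {t : ℝ} (ht : t < VaR μ α) :
    cdfFun μ t < α := by
  by_contra h
  push_neg at h
  exact absurd (csInf_le (VaR_set_bddBelow hα.1) h) (not_le.2 ht)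

lemma le_cdf_of_VaR_lt (hα : α ∈ Set.Ioo (0:ℝ) 1) {t : ℝ} (ht : VaR μ α < t) :
    α ≤ cdfFun μ t := by
  obtain ⟨x, hx, hxt⟩ := (csInf_lt_iff (VaR_set_bddBelow hα.1) (VaR_set_nonempty hα.2)).1 ht
  exact le_trans hx (cdfFun_mono hxt.le)

end Aux

section Key

variable {μ : Measure ℝ} [IsProbabilityMeasure μ]

lemma measurable_cdf_ennreal : Measurable (fun t : ℝ => μ (Set.Iio t)) :=
  Monotone.measurable (fun a b hab => measure_mono (Set.Iio_subset_Iio hab))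

/-- key Fubini identity -/
lemma lintegral_pospart_diff (q v : ℝ) (hqv : q ≤ v) :
    ∫⁻ x, ENNReal.ofReal (max (v - x) 0 - max (q - x) 0) ∂μ
      = ∫⁻ t in Set.Ioc q v, μ (Set.Iio t) := by
  have hpt : ∀ x : ℝ, ENNReal.ofReal (max (v - x) 0 - max (q - x) 0)
      = ∫⁻ t in Set.Ioc q v, Set.indicator (Set.Ioi x) (1 : ℝ → ℝ≥0∞) t := by
    intro x
    rw [lintegral_indicator_one measurableSet_Ioi,
      Measure.restrict_apply measurableSet_Ioi]
    have : Set.Ioi x ∩ Set.Ioc q v = Set.Ioc (max q x) v := by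
      ext t
      simp only [Set.mem_inter_iff, Set.mem_Ioi, Set.mem_Ioc, max_lt_iff]
      tauto
    rw [this, Real.volume_Ioc]
    rcases le_total x v with h2 | h2
    · congr 1
      rcases le_total x q with h | h
      · rw [max_eq_left h, max_eq_left (by linarith), max_eq_left (by linarith)]
        ring
      · rw [max_eq_right h, max_eq_left (by linarith), max_eq_right (by linarith)]
        ring
    · rw [max_eq_right (le_trans hqv h2), max_eq_right (by linarith),
        max_eq_right (by linarith), sub_self, ENNReal.ofReal_zero]
      exact (ENNReal.ofReal_eq_zero.2 (by linarith)).symm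
  simp_rw [hpt]
  rw [lintegral_lintegral_swap]
  · apply lintegral_congr
    intro t
    have : ∀ x : ℝ, Set.indicator (Set.Ioi x) (1 : ℝ → ℝ≥0∞) t
        = Set.indicator (Set.Iio t) (1 : ℝ → ℝ≥0∞) x := by
      intro x
      simp only [Set.indicator_apply, Set.mem_Ioi, Set.mem_Iio, Pi.one_apply]
    simp_rw [this]
    rw [lintegral_indicator_one measurableSet_Iio]
  · have : Function.uncurry (fun (x t : ℝ) => Set.indicator (Set.Ioi x) (1 : ℝ → ℝ≥0∞) t)
        = Set.indicator {p : ℝ × ℝ | p.1 < p.2} (1 : ℝ × ℝ → ℝ≥0∞) := by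
      funext p
      rcases p with ⟨x, t⟩
      simp only [Function.uncurry, Set.indicator_apply, Set.mem_Ioi, Set.mem_setOf_eq, Pi.one_apply]
    rw [this]
    exact ((measurable_const.indicator
      (measurableSet_lt measurable_fst measurable_snd))).aemeasurable

lemma checkLoss_eq (α x v : ℝ) : checkLoss α x v = max (v - x) 0 - α * (v - x) := by
  unfold checkLoss
  rcases lt_or_ge x v with h | h
  · rw [if_pos h, max_eq_left (by linarith)]
    ring
  · rw [if_neg (not_lt.2 h), max_eq_right (by linarith)]
    ring

lemma integrable_pospart (hint : Integrable (fun x => x) μ) (v : ℝ) :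
    Integrable (fun x => max (v - x) 0) μ :=
  ((integrable_const v).sub hint).pos_part

lemma integrable_checkLoss (hint : Integrable (fun x => x) μ) (α v : ℝ) :
    Integrable (fun x => checkLoss α x v) μ := by
  simp_rw [checkLoss_eq]
  exact (integrable_pospart hint v).sub (((integrable_const v).sub hint).const_mul α)

/-- The integral difference formula. -/
lemma integral_checkLoss_diff (hint : Integrable (fun x => x) μ) (α q v : ℝ) (hqv : q ≤ v) :
    ∫ x, checkLoss α x v ∂μ - ∫ x, checkLoss α x q ∂μ
      = (∫⁻ t in Set.Ioc q v, μ (Set.Iio t)).toReal - α * (v - q) := by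
  have hf : Integrable (fun x => max (v - x) 0 - max (q - x) 0) μ :=
    (integrable_pospart hint v).sub (integrable_pospart hint q)
  have hnn : (0 : ℝ → ℝ) ≤ᵐ[μ] fun x => max (v - x) 0 - max (q - x) 0 := by
    filter_upwards with x
    simp only [Pi.zero_apply, sub_nonneg]
    exact max_le_max (by linarith) le_rfl
  have h1 : ∫ x, (max (v - x) 0 - max (q - x) 0) ∂μ
      = (∫⁻ t in Set.Ioc q v, μ (Set.Iio t)).toReal := by
    rw [integral_eq_lintegral_of_nonneg_ae hnn hf.aestronglyMeasurable,
      ← lintegral_pospart_diff q v hqv]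
  rw [← integral_sub (integrable_checkLoss hint α v) (integrable_checkLoss hint α q)]
  have h2 : ∀ x : ℝ, checkLoss α x v - checkLoss α x q
      = (max (v - x) 0 - max (q - x) 0) - α * (v - q) := by
    intro x
    rw [checkLoss_eq, checkLoss_eq]
    ring
  simp_rw [h2]
  rw [integral_sub hf (integrable_const _), h1, integral_const]
  simp

end Key

section CdfAtVaR

variable {μ : Measure ℝ} [IsProbabilityMeasure μ] {α ε : ℝ}

lemma cdf_VaR_ge (hα : α ∈ Set.Ioo (0:ℝ) 1) (hε : 0 < ε)
    (hcont : ContinuousOn (cdfFun μ) (Set.Ioo (VaR μ α - ε) (VaR μ α + ε))) :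
    α ≤ cdfFun μ (VaR μ α) := by
  set q := VaR μ α with hq
  have hqmem : q ∈ Set.Ioo (q - ε) (q + ε) := ⟨by linarith, by linarith⟩
  have hc : Filter.Tendsto (cdfFun μ) (𝓝[Set.Ioo q (q + ε)] q) (𝓝 (cdfFun μ q)) :=
    (hcont.continuousWithinAt hqmem).mono_left
      (nhdsWithin_mono q (fun t ht => ⟨by linarith [ht.1], ht.2⟩))
  rw [nhdsWithin_Ioo_eq_nhdsGT (by linarith : q < q + ε)] at hc
  refine ge_of_tendsto hc ?_
  filter_upwards [self_mem_nhdsWithin] with t ht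
  exact le_cdf_of_VaR_lt hα ht

lemma cdf_VaR_le (hα : α ∈ Set.Ioo (0:ℝ) 1) (hε : 0 < ε)
    (hcont : ContinuousOn (cdfFun μ) (Set.Ioo (VaR μ α - ε) (VaR μ α + ε))) :
    cdfFun μ (VaR μ α) ≤ α := by
  set q := VaR μ α with hq
  have hqmem : q ∈ Set.Ioo (q - ε) (q + ε) := ⟨by linarith, by linarith⟩
  have hc : Filter.Tendsto (cdfFun μ) (𝓝[Set.Ioo (q - ε) q] q) (𝓝 (cdfFun μ q)) :=
    (hcont.continuousWithinAt hqmem).mono_left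
      (nhdsWithin_mono q (fun t ht => ⟨ht.1, by linarith [ht.2]⟩))
  rw [nhdsWithin_Ioo_eq_nhdsLT (by linarith : q - ε < q)] at hc
  refine le_of_tendsto hc ?_
  filter_upwards [self_mem_nhdsWithin] with t ht
  exact (cdf_lt_of_lt_VaR hα ht).le

end CdfAtVaR

theorem VaR_unique_minimizer_check_loss
    (μ : Measure ℝ) [IsProbabilityMeasure μ]
    (hint : Integrable (fun x => x) μ)
    (α : ℝ) (hα : α ∈ Set.Ioo (0 : ℝ) 1)
    (ε : ℝ) (hε : 0 < ε)
    (hcont : ContinuousOn (cdfFun μ) (Set.Ioo (VaR μ α - ε) (VaR μ α + ε)))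
    (hmono : StrictMonoOn (cdfFun μ) (Set.Ioo (VaR μ α - ε) (VaR μ α + ε))) :
    ∀ v : ℝ, v ≠ VaR μ α →
      ∫ x, checkLoss α x (VaR μ α) ∂μ < ∫ x, checkLoss α x v ∂μ := by
  intro v hv
  set q := VaR μ α with hqdef
  obtain ⟨hα0, hα1⟩ := hα
  have hqmem : q ∈ Set.Ioo (q - ε) (q + ε) := ⟨by linarith, by linarith⟩
  have hFq_ge : α ≤ cdfFun μ q := cdf_VaR_ge ⟨hα0, hα1⟩ hε hcont
  have hFq_le : cdfFun μ q ≤ α := cdf_VaR_le ⟨hα0, hα1⟩ hε hcont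
  have hF0 : ∀ t : ℝ, (0:ℝ) ≤ cdfFun μ t := fun t => ENNReal.toReal_nonneg
  rcases lt_or_gt_of_ne hv with hlt | hgt
  · -- v < q : show ∫ checkLoss q < ∫ checkLoss v
    have hdiff := integral_checkLoss_diff (μ := μ) hint α v q hlt.le
    set t1 := (max v (q - ε) + q) / 2 with ht1def
    have hmax : max v (q - ε) < q := max_lt hlt (by linarith)
    have hvt1 : v < t1 := by
      have := le_max_left v (q - ε); simp only [ht1def]; linarith
    have ht1e : q - ε < t1 := by
      have := le_max_right v (q - ε); simp only [ht1def]; linarith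
    have ht1q : t1 < q := by simp only [ht1def]; linarith
    have hFt1 : cdfFun μ t1 < α := cdf_lt_of_lt_VaR ⟨hα0, hα1⟩ ht1q
    have hsplit : Set.Ioc v q = Set.Ioc v t1 ∪ Set.Ioc t1 q :=
      (Set.Ioc_union_Ioc_eq_Ioc hvt1.le ht1q.le).symm
    have hL : ∫⁻ t in Set.Ioc v q, μ (Set.Iio t)
        < ENNReal.ofReal (α * (q - v)) := by
      calc ∫⁻ t in Set.Ioc v q, μ (Set.Iio t)
          = (∫⁻ t in Set.Ioc v t1, μ (Set.Iio t))
            + ∫⁻ t in Set.Ioc t1 q, μ (Set.Iio t) := by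
            rw [hsplit, lintegral_union measurableSet_Ioc (Set.Ioc_disjoint_Ioc_of_le le_rfl)]
        _ ≤ ENNReal.ofReal (cdfFun μ t1) * volume (Set.Ioc v t1)
            + ENNReal.ofReal α * volume (Set.Ioc t1 q) := by
            gcongr
            · rw [← setLIntegral_const]
              refine setLIntegral_mono measurable_const (fun t ht => ?_)
              rw [← measure_Iic_eq]
              exact measure_mono (fun x hx => le_trans (le_of_lt hx) ht.2)
            · rw [← setLIntegral_const]
              refine setLIntegral_mono measurable_const (fun t ht => ?_)
              calc μ (Set.Iio t) ≤ μ (Set.Iic q) :=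
                    measure_mono (fun x hx => le_trans (le_of_lt hx) ht.2)
                _ = ENNReal.ofReal (cdfFun μ q) := measure_Iic_eq μ q
                _ ≤ ENNReal.ofReal α := ENNReal.ofReal_le_ofReal hFq_le
        _ = ENNReal.ofReal (cdfFun μ t1 * (t1 - v) + α * (q - t1)) := by
            rw [Real.volume_Ioc, Real.volume_Ioc, ← ENNReal.ofReal_mul (hF0 t1),
              ← ENNReal.ofReal_mul hα0.le,
              ← ENNReal.ofReal_add (mul_nonneg (hF0 t1) (by linarith))
                (mul_nonneg hα0.le (by linarith))]
        _ < ENNReal.ofReal (α * (q - v)) := by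
            rw [ENNReal.ofReal_lt_ofReal_iff (by nlinarith)]
            nlinarith [mul_lt_mul_of_pos_right hFt1 (sub_pos.2 hvt1)]
    have hL' : (∫⁻ t in Set.Ioc v q, μ (Set.Iio t)).toReal < α * (q - v) :=
      ENNReal.toReal_lt_of_lt_ofReal hL
    linarith
  · -- q < v
    have hdiff := integral_checkLoss_diff (μ := μ) hint α q v hgt.le
    set t0 := (q + min v (q + ε)) / 2 with ht0def
    have hmin : q < min v (q + ε) := lt_min hgt (by linarith)
    have hqt0 : q < t0 := by simp only [ht0def]; linarith
    have ht0v : t0 < v := by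
      have := min_le_left v (q + ε); simp only [ht0def]; linarith
    have ht0e : t0 < q + ε := by
      have := min_le_right v (q + ε); simp only [ht0def]; linarith
    have ht0mem : t0 ∈ Set.Ioo (q - ε) (q + ε) := ⟨by linarith, ht0e⟩
    have hFt0 : α < cdfFun μ t0 :=
      lt_of_le_of_lt hFq_ge (hmono hqmem ht0mem hqt0)
    have hsplit : Set.Ioc q v = Set.Ioc q t0 ∪ Set.Ioc t0 v :=
      (Set.Ioc_union_Ioc_eq_Ioc hqt0.le ht0v.le).symm
    have hLfin : ∫⁻ t in Set.Ioc q v, μ (Set.Iio t) ≠ ⊤ := by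
      refine ne_top_of_le_ne_top ?_
        (setLIntegral_mono measurable_const (fun t _ => prob_le_one (μ := μ)))
      rw [setLIntegral_const]
      simp [Real.volume_Ioc]
    have hL : ENNReal.ofReal (α * (v - q))
        < ∫⁻ t in Set.Ioc q v, μ (Set.Iio t) := by
      have hstep1 : ENNReal.ofReal (α * (v - q))
          < ENNReal.ofReal (α * (t0 - q) + cdfFun μ t0 * (v - t0)) := by
        rw [ENNReal.ofReal_lt_ofReal_iff (by nlinarith [mul_lt_mul_of_pos_right hFt0 (sub_pos.2 ht0v)])]
        nlinarith [mul_lt_mul_of_pos_right hFt0 (sub_pos.2 ht0v)]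
      refine lt_of_lt_of_le hstep1 ?_
      calc ENNReal.ofReal (α * (t0 - q) + cdfFun μ t0 * (v - t0))
          = ENNReal.ofReal α * volume (Set.Ioc q t0)
            + ENNReal.ofReal (cdfFun μ t0) * volume (Set.Ioc t0 v) := by
            rw [Real.volume_Ioc, Real.volume_Ioc, ← ENNReal.ofReal_mul hα0.le,
              ← ENNReal.ofReal_mul (hF0 t0),
              ← ENNReal.ofReal_add (mul_nonneg hα0.le (by linarith))
                (mul_nonneg (hF0 t0) (by linarith))]
        _ ≤ (∫⁻ t in Set.Ioc q t0, μ (Set.Iio t))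
            + ∫⁻ t in Set.Ioc t0 v, μ (Set.Iio t) := by
            gcongr
            · rw [← setLIntegral_const]
              refine setLIntegral_mono measurable_cdf_ennreal (fun t ht => ?_)
              calc ENNReal.ofReal α ≤ ENNReal.ofReal (cdfFun μ q) :=
                    ENNReal.ofReal_le_ofReal hFq_ge
                _ = μ (Set.Iic q) := (measure_Iic_eq μ q).symm
                _ ≤ μ (Set.Iio t) := measure_mono (fun x hx => lt_of_le_of_lt hx ht.1)
            · rw [← setLIntegral_const]
              refine setLIntegral_mono measurable_cdf_ennreal (fun t ht => ?_)
              calc ENNReal.ofReal (cdfFun μ t0) = μ (Set.Iic t0) := (measure_Iic_eq μ t0).symm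
                _ ≤ μ (Set.Iio t) := measure_mono (fun x hx => lt_of_le_of_lt hx ht.1)
        _ = ∫⁻ t in Set.Ioc q v, μ (Set.Iio t) := by
            rw [hsplit, lintegral_union measurableSet_Ioc (Set.Ioc_disjoint_Ioc_of_le le_rfl)]
    have hL' : α * (v - q) < (∫⁻ t in Set.Ioc q v, μ (Set.Iio t)).toReal :=
      (ENNReal.ofReal_lt_iff_lt_toReal (by nlinarith) hLfin).1 hL
    linarith
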